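/- Let G be a bipartite graph on n vertices whose Randić matrix R has eigenvalues ±1 and nullity η, and suppose tr(R²) ≤ (n+1)/2. Then RE(G) ≤ √(n−2−η)·√(n−3)·(√2)/2 + 2. -/

import Mathlib

/-!
Outside the two eigenvalues `1` and `-1` and the `η` zero eigenvalues there remain `n - 2 - η`
eigenvalues of the Randić matrix, and since `tr(R²)` is the sum of the squared eigenvalues, their
squares add up to at most `(n + 1) / 2 - 2 = (n - 3) / 2`. The Cauchy–Schwarz inequality bounds
the sum of their absolute values by `√(n - 2 - η) · √((n - 3) / 2)`, and the two eigenvalues `±1`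
contribute `2` to the energy.
-/

open scoped Classical

noncomputable def randicMatrix {V : Type*} [Fintype V] (G : SimpleGraph V)
    [DecidableRel G.Adj] : Matrix V V ℝ :=
  fun u v =>
    if G.Adj u v then 1 / Real.sqrt ((G.degree u : ℝ) * (G.degree v : ℝ)) else 0

noncomputable def randicIndex {V : Type*} [Fintype V] (G : SimpleGraph V)
    [DecidableRel G.Adj] : ℝ :=
  (1 / 2) * ∑ u, ∑ v, if G.Adj u v then 1 / ((G.degree u : ℝ) * (G.degree v : ℝ)) else 0

open Finset

theorem Matrix.IsHermitian.trace_mul_self_eq_sum_sq_eigenvalues {𝕜 n : Type*} [RCLike 𝕜]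
    [Fintype n] [DecidableEq n] {A : Matrix n n 𝕜} (hA : A.IsHermitian) :
    (A * A).trace = ∑ i, (hA.eigenvalues i : 𝕜) ^ 2 := by
  conv_lhs => rw [hA.spectral_theorem, ← map_mul, Unitary.conjStarAlgAut_apply,
    Matrix.trace_mul_cycle, Unitary.coe_star_mul_self, Matrix.one_mul,
    Matrix.diagonal_mul_diagonal, Matrix.trace_diagonal]
  simp [sq]

theorem Finset.sum_abs_le_sqrt_card_mul_sqrt_sum_sq {ι : Type*} (s : Finset ι) (f : ι → ℝ) :
    ∑ i ∈ s, |f i| ≤ √(#s : ℝ) * √(∑ i ∈ s, f i ^ 2) := by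
  rw [← Real.sqrt_mul (Nat.cast_nonneg _)]
  apply Real.le_sqrt_of_sq_le
  simpa only [sq_abs] using sq_sum_le_card_mul_sum_sq (s := s) (f := fun i => |f i|)

theorem Real.sqrt_div_two (x : ℝ) : √(x / 2) = √x * √2 / 2 := by
  rw [Real.sqrt_div' _ zero_le_two, div_eq_iff (by positivity), mul_div_assoc, mul_assoc,
    div_mul_eq_mul_div, Real.mul_self_sqrt zero_le_two, div_self two_ne_zero, mul_one]

section SupportOffPair

variable {ι M : Type*} [Fintype ι] [Zero M] {μ : ι → M} {i₀ i₁ : ι}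

theorem pair_subset_support (h₀ : μ i₀ ≠ 0) (h₁ : μ i₁ ≠ 0) :
    {i₀, i₁} ⊆ ({i | μ i ≠ 0} : Finset ι) := by
  simp [insert_subset_iff, h₀, h₁]

theorem sum_eq_sum_support_sdiff_pair_add {N : Type*} [AddCommMonoid N] (g : M → N)
    (hg : g 0 = 0) (hne : i₀ ≠ i₁) (h₀ : μ i₀ ≠ 0) (h₁ : μ i₁ ≠ 0) :
    ∑ i, g (μ i) =
      ∑ i ∈ ({i | μ i ≠ 0} : Finset ι) \ {i₀, i₁}, g (μ i) + (g (μ i₀) + g (μ i₁)) := by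
  rw [← sum_pair (f := fun i => g (μ i)) hne, sum_sdiff (pair_subset_support h₀ h₁)]
  refine (sum_filter_of_ne fun i _ hi => ?_).symm
  contrapose! hi
  rw [hi, hg]

theorem card_support_sdiff_pair_add_card_zeros (hne : i₀ ≠ i₁) (h₀ : μ i₀ ≠ 0)
    (h₁ : μ i₁ ≠ 0) :
    #(({i | μ i ≠ 0} : Finset ι) \ {i₀, i₁}) + 2 + #{i | μ i = 0} = Fintype.card ι := by
  have hsub := pair_subset_support h₀ h₁
  rw [card_sdiff_of_subset hsub, card_pair hne, Nat.sub_add_cancel (card_pair hne ▸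
    card_le_card hsub), add_comm, card_filter_add_card_filter_not, card_univ]

end SupportOffPair

theorem randic_energy_bound_small_trace_general {V : Type*} [Fintype V]
    (G : SimpleGraph V) [DecidableRel G.Adj] (n : ℕ)
    (hn : Fintype.card V = n)
    (hR : (randicMatrix G).IsHermitian)
    (h1 : ∃ i, hR.eigenvalues i = 1) (hneg1 : ∃ i, hR.eigenvalues i = -1)
    (η : ℕ) (hη : η = (Finset.univ.filter fun i => hR.eigenvalues i = 0).card)
    (htr : (randicMatrix G * randicMatrix G).trace ≤ ((n : ℝ) + 1) / 2) :
    ∑ i, |hR.eigenvalues i| ≤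
      Real.sqrt ((n : ℝ) - 2 - η) * Real.sqrt ((n : ℝ) - 3) * Real.sqrt 2 / 2 + 2 := by
  obtain ⟨i₀, h₀⟩ := h1
  obtain ⟨i₁, h₁⟩ := hneg1
  set μ := hR.eigenvalues
  have hne : i₀ ≠ i₁ := fun h => by norm_num [h, h₁] at h₀
  have h₀' : μ i₀ ≠ 0 := by norm_num [h₀]
  have h₁' : μ i₁ ≠ 0 := by norm_num [h₁]
  set T : Finset V := ({i | μ i ≠ 0} : Finset V) \ {i₀, i₁}
  have hT : (#T : ℝ) = n - 2 - η := by
    have := card_support_sdiff_pair_add_card_zeros hne h₀' h₁'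
    rw [hη, ← hn, ← this]
    push_cast
    ring
  have hsq : ∑ i ∈ T, μ i ^ 2 ≤ ((n : ℝ) - 3) / 2 := by
    have hsplit : ∑ i, μ i ^ 2 = ∑ i ∈ T, μ i ^ 2 + 2 := by
      rw [sum_eq_sum_support_sdiff_pair_add (· ^ 2) (zero_pow two_ne_zero) hne h₀' h₁', h₀, h₁,
        neg_one_sq, one_pow, one_add_one_eq_two]
    rw [hR.trace_mul_self_eq_sum_sq_eigenvalues] at htr
    simp only [RCLike.ofReal_real_eq_id, id] at htr
    linarith
  calc ∑ i, |μ i| = ∑ i ∈ T, |μ i| + 2 := by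
        rw [sum_eq_sum_support_sdiff_pair_add _ abs_zero hne h₀' h₁', h₀, h₁, abs_neg, abs_one,
          one_add_one_eq_two]
    _ ≤ √(#T : ℝ) * √(∑ i ∈ T, μ i ^ 2) + 2 := by
        gcongr
        exact sum_abs_le_sqrt_card_mul_sqrt_sum_sq T μ
    _ ≤ √((n : ℝ) - 2 - η) * √(((n : ℝ) - 3) / 2) + 2 := by
        rw [hT]
        gcongr
    _ = _ := by rw [Real.sqrt_div_two]; ring

theorem randic_energy_bound_small_trace {V : Type*} [Fintype V]
    (G : SimpleGraph V) [DecidableRel G.Adj] (n : ℕ)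
    (hn : Fintype.card V = n) (hbip : G.Colorable 2)
    (hR : (randicMatrix G).IsHermitian)
    (h1 : ∃ i, hR.eigenvalues i = 1) (hneg1 : ∃ i, hR.eigenvalues i = -1)
    (η : ℕ) (hη : η = (Finset.univ.filter fun i => hR.eigenvalues i = 0).card)
    (htr : (randicMatrix G * randicMatrix G).trace ≤ ((n : ℝ) + 1) / 2) :
    ∑ i, |hR.eigenvalues i| ≤
      Real.sqrt ((n : ℝ) - 2 - η) * Real.sqrt ((n : ℝ) - 3) * Real.sqrt 2 / 2 + 2 :=
  randic_energy_bound_small_trace_general G n hn hR h1 hneg1 η hη htr
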